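/- arXiv:1604.06283 — 6 statements merged into one kernel-verified Lean document; each statement's English description precedes it below -/
import Mathlib

section
/- If X is a binomial random variable with parameters n and p such that np is an integer, then P[X ≥ np] > 1/2. -/
/-!
Write `f` for the pmf of `Bin(n, p)` and `m = np`, and compare `f (m + i)` with its mirror image
`f (m - 1 - i)`. Their ratio exceeds `1` at `i = 0`, and by the recurrence
`f (k + 1) (k + 1) (1 - p) = f k (n - k) p` it grows from `i` to `i + 1` exactly when
`(2p - 1)(i + 1)² ≤ p² (2n(1 - p) + 1)`.

For `p ≤ 1/2` this always holds, so each `f (m + i)` beats its mirror and `P[X ≥ m] > P[X < m]`.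
For `p > 1/2` the ratio first grows and then decreases, so the differences
`f (m + i) - f (m - 1 - i)` change sign at most once, from `+` to `-`. Their weighted sum with the
increasing weights `2i + 1` is `E[2(X - m) + 1] = 1 > 0`, and under a single sign change this
forces the unweighted sum `P[X ≥ m] - P[X < m]` to be positive as well.
-/

/-- The binomial probability mass function: `P[Bin(n,p) = k]`. -/
noncomputable def binomialPMF (n : ℕ) (p : ℝ) (k : ℕ) : ℝ :=
  (n.choose k : ℝ) * p ^ k * (1 - p) ^ (n - k)

open Finset

section Binomial

variable (n : ℕ) (p : ℝ)

theorem binomialPMF_eq_eval_bernsteinPolynomial (k : ℕ) :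
    binomialPMF n p k = (bernsteinPolynomial ℝ n k).eval p := by
  simp [binomialPMF, bernsteinPolynomial]

theorem sum_binomialPMF : ∑ k ∈ range (n + 1), binomialPMF n p k = 1 := by
  simp_rw [binomialPMF_eq_eval_bernsteinPolynomial, ← Polynomial.eval_finsetSum,
    bernsteinPolynomial.sum, Polynomial.eval_one]

theorem sum_mul_binomialPMF : ∑ k ∈ range (n + 1), k * binomialPMF n p k = n * p := by
  simpa [binomialPMF_eq_eval_bernsteinPolynomial, Polynomial.eval_finsetSum] using
    congrArg (Polynomial.eval p) (bernsteinPolynomial.sum_smul ℝ n)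

theorem binomialPMF_eq_zero_of_lt {k : ℕ} (hk : n < k) : binomialPMF n p k = 0 := by
  simp [binomialPMF, Nat.choose_eq_zero_of_lt hk]

theorem binomialPMF_succ_mul (k : ℕ) :
    binomialPMF n p (k + 1) * ((k + 1) * (1 - p)) = binomialPMF n p k * ((n - k : ℕ) * p) := by
  rcases lt_or_ge k n with hk | hk
  · have hc : (n.choose (k + 1) : ℝ) * (k + 1) = n.choose k * (n - k : ℕ) := by
      exact_mod_cast Nat.choose_succ_right_eq n k
    have he : (1 - p) ^ (n - k) = (1 - p) ^ (n - (k + 1)) * (1 - p) := by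
      rw [← pow_succ]; congr 1; omega
    unfold binomialPMF
    rw [he, pow_succ]
    linear_combination (p ^ k * p * (1 - p) ^ (n - (k + 1)) * (1 - p)) * hc
  · simp [binomialPMF_eq_zero_of_lt n p (show n < k + 1 by omega), Nat.sub_eq_zero_of_le hk]

theorem sum_range_mul_binomialPMF_of_le (g : ℕ → ℝ) {N : ℕ} (hN : n + 1 ≤ N) :
    ∑ k ∈ range N, g k * binomialPMF n p k = ∑ k ∈ range (n + 1), g k * binomialPMF n p k := by
  refine (sum_subset (range_subset_range.2 hN) fun k _ hk => ?_).symm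
  rw [binomialPMF_eq_zero_of_lt n p (by simpa using hk), mul_zero]

variable {n p}

theorem binomialPMF_nonneg (hp0 : 0 ≤ p) (hp1 : p ≤ 1) (k : ℕ) : 0 ≤ binomialPMF n p k := by
  have : 0 ≤ 1 - p := by linarith
  unfold binomialPMF
  positivity

theorem binomialPMF_pos (hp0 : 0 < p) (hp1 : p < 1) {k : ℕ} (hk : k ≤ n) :
    0 < binomialPMF n p k := by
  have : 0 < 1 - p := by linarith
  have := Nat.choose_pos hk
  unfold binomialPMF
  positivity

theorem sum_range_binomialPMF_le_one (hp0 : 0 ≤ p) (hp1 : p ≤ 1) (N : ℕ) :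
    ∑ k ∈ range N, binomialPMF n p k ≤ 1 := by
  calc ∑ k ∈ range N, binomialPMF n p k ≤ ∑ k ∈ range (N + (n + 1)), 1 * binomialPMF n p k := by
        simp only [one_mul]
        exact sum_le_sum_of_subset_of_nonneg (range_subset_range.2 (by omega))
          fun k _ _ => binomialPMF_nonneg hp0 hp1 k
    _ = 1 := by
        rw [sum_range_mul_binomialPMF_of_le n p _ (by omega)]
        simpa using sum_binomialPMF n p

end Binomial

theorem sum_range_add_reflect {M : Type*} [AddCommMonoid M] (g : ℕ → M) (m : ℕ) :
    ∑ i ∈ range m, (g (m + i) + g (m - 1 - i)) = ∑ k ∈ range (m + m), g k := by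
  rw [sum_add_distrib, sum_range_reflect, sum_range_add, add_comm]

theorem sum_range_pos_of_sign_change {E w : ℕ → ℝ} {N : ℕ} (hw : Monotone w)
    (hw0 : ∀ i, 0 ≤ w i) (hE : ∀ i, i + 1 < N → E i ≤ 0 → E (i + 1) ≤ 0)
    (h : 0 < ∑ i ∈ range N, w i * E i) :
    0 < ∑ i ∈ range N, E i := by
  classical
  -- `j₀` is the first index with `E j₀ ≤ 0`, or `N` if there is none.
  have hex : ∃ j, j < N → E j ≤ 0 := ⟨N, fun h => absurd h (lt_irrefl N)⟩
  set j₀ := Nat.find hex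
  have hbelow : ∀ i < j₀, 0 < E i := fun i hi => by
    have := Nat.find_min hex hi
    push Not at this
    exact this.2
  have habove : ∀ i, j₀ ≤ i → i < N → E i ≤ 0 := by
    intro i hi
    induction i, hi using Nat.le_induction with
    | base => exact Nat.find_spec hex
    | succ i _ ih => exact fun hiN => hE i hiN (ih (by omega))
  have hcmp : ∑ i ∈ range N, w i * E i ≤ w j₀ * ∑ i ∈ range N, E i := by
    rw [mul_sum]
    refine sum_le_sum fun i hi => ?_
    rcases lt_or_ge i j₀ with hij | hij
    · exact mul_le_mul_of_nonneg_right (hw hij.le) (hbelow i hij).le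
    · exact mul_le_mul_of_nonpos_right (hw hij) (habove i hij (mem_range.1 hi))
  exact pos_of_mul_pos_right (h.trans_le hcmp) (hw0 j₀)

section IntegerMean

variable {n m : ℕ} {p : ℝ}

/- The two right factors differ by `p² (2n(1 - p) + 1) - (2p - 1)(i + 1)²`, whose sign decides
whether `f (m + i) / f (m - 1 - i)` grows from `i` to `i + 1`. -/
theorem binomialPMF_mean_pair_mul_eq (hm : (m : ℝ) = n * p) {i : ℕ} (him : i + 2 ≤ m)
    (hin : m + i ≤ n) :
    binomialPMF n p (m + (i + 1)) * ((m + i + 1) * (1 - p) * ((n - m + i + 2) * p)) =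
        binomialPMF n p (m + i) * ((n - m - i) * (n - m + i + 2) * p ^ 2) ∧
      binomialPMF n p (m - 1 - (i + 1)) * ((m + i + 1) * (1 - p) * ((n - m + i + 2) * p)) =
        binomialPMF n p (m - 1 - i) * ((n - m - i) * (n - m + i + 2) * p ^ 2 -
          (p ^ 2 * (2 * n * (1 - p) + 1) - (2 * p - 1) * (i + 1) ^ 2)) := by
  have ha := binomialPMF_succ_mul n p (m + i)
  have hb := binomialPMF_succ_mul n p (m - 1 - (i + 1))
  rw [show m - 1 - (i + 1) + 1 = m - 1 - i by omega] at hb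
  have c1 : ((n - (m + i) : ℕ) : ℝ) = n - m - i := by
    push_cast [Nat.cast_sub hin]; ring
  have c2 : ((m - 1 - (i + 1) : ℕ) : ℝ) = m - i - 2 := by
    rw [show m - 1 - (i + 1) = m - (i + 2) by omega]; push_cast [Nat.cast_sub him]; ring
  have c3 : ((n - (m - 1 - (i + 1)) : ℕ) : ℝ) = n - m + i + 2 := by
    rw [show n - (m - 1 - (i + 1)) = n + (i + 2) - m by omega]
    push_cast [Nat.cast_sub (show m ≤ n + (i + 2) by omega)]; ring
  have hQ : (m - 1 - i) * (1 - p) * ((m + i + 1) * (1 - p)) =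
      (n - m - i) * (n - m + i + 2) * p ^ 2 -
        (p ^ 2 * (2 * n * (1 - p) + 1) - (2 * p - 1) * (i + 1) ^ 2) := by
    rw [hm]; ring
  rw [c1] at ha
  rw [c2, c3] at hb
  push_cast at ha
  constructor
  · linear_combination ((n - m + i + 2) * p) * ha
  · rw [← hQ]
    linear_combination (-((m + i + 1) * (1 - p))) * hb

theorem binomialPMF_pred_mean_lt_mean (hp0 : 0 < p) (hp1 : p < 1) (hm : (m : ℝ) = n * p)
    (hm0 : 0 < m) (hmn : m < n) : binomialPMF n p (m - 1) < binomialPMF n p m := by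
  have h := binomialPMF_succ_mul n p (m - 1)
  rw [Nat.sub_add_cancel hm0, show n - (m - 1) = n - m + 1 by omega, Nat.cast_add,
    Nat.cast_sub hmn.le, Nat.cast_sub hm0, Nat.cast_one, sub_add_cancel,
    show (m : ℝ) * (1 - p) = (n - m) * p by rw [hm]; ring] at h
  have hpos := binomialPMF_pos (n := n) hp0 hp1 (show m - 1 ≤ n by omega)
  have hnm : (0 : ℝ) < n - m := by rw [sub_pos]; exact_mod_cast hmn
  refine lt_of_mul_lt_mul_right (a := (n - m) * p) ?_ (by positivity)
  nlinarith

theorem binomialPMF_mean_pair_lt (hp0 : 0 < p) (hp1 : p < 1) (hm : (m : ℝ) = n * p)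
    (hm0 : 0 < m) {i : ℕ} (him : i < m) (hin : m + i < n)
    (hC : (2 * p - 1) * i ^ 2 ≤ p ^ 2 * (2 * n * (1 - p) + 1)) :
    binomialPMF n p (m - 1 - i) < binomialPMF n p (m + i) := by
  induction i with
  | zero => simpa using binomialPMF_pred_mean_lt_mean hp0 hp1 hm hm0 (by omega)
  | succ i ih =>
    push_cast at hC
    have hC' : (2 * p - 1) * i ^ 2 ≤ p ^ 2 * (2 * n * (1 - p) + 1) := by
      rcases le_or_gt (2 * p - 1) 0 with hp | hp
      · have : 0 ≤ 2 * (n : ℝ) * (1 - p) + 1 := by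
          nlinarith [(Nat.cast_nonneg n : (0 : ℝ) ≤ n)]
        nlinarith [sq_nonneg (i : ℝ), sq_nonneg p]
      · nlinarith [(Nat.cast_nonneg i : (0 : ℝ) ≤ i)]
    obtain ⟨ha, hb⟩ := binomialPMF_mean_pair_mul_eq hm (i := i) (by omega) (by omega)
    have hb0 := binomialPMF_nonneg (n := n) hp0.le hp1.le (m - 1 - i)
    have hnmi : (0 : ℝ) < n - m - i := by
      have : ((m + i : ℕ) : ℝ) < n := by exact_mod_cast (show m + i < n by omega)
      push_cast at this; linarith
    have hK : (0 : ℝ) < (m + i + 1) * (1 - p) * ((n - m + i + 2) * p) := by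
      have : (0 : ℝ) < 1 - p := by linarith
      have : (0 : ℝ) < n - m + i + 2 := by linarith
      positivity
    have hP : (0 : ℝ) < (n - m - i) * (n - m + i + 2) * p ^ 2 := by
      have : (0 : ℝ) < n - m + i + 2 := by linarith
      positivity
    refine lt_of_mul_lt_mul_right (a := (m + i + 1) * (1 - p) * ((n - m + i + 2) * p)) ?_ hK.le
    rw [ha, hb]
    calc _ ≤ binomialPMF n p (m - 1 - i) * ((n - m - i) * (n - m + i + 2) * p ^ 2) :=
          mul_le_mul_of_nonneg_left (by linarith) hb0
      _ < _ := mul_lt_mul_of_pos_right (ih (by omega) (by omega) hC') hP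

theorem binomialPMF_mean_pair_le_succ (hp0 : 0 < p) (hp1 : p < 1) (hm : (m : ℝ) = n * p)
    (hm0 : 0 < m) (hp : 1 / 2 < p) {i : ℕ} (him : i + 1 < m)
    (h : binomialPMF n p (m + i) ≤ binomialPMF n p (m - 1 - i)) :
    binomialPMF n p (m + (i + 1)) ≤ binomialPMF n p (m - 1 - (i + 1)) := by
  have hb0 := binomialPMF_nonneg (n := n) hp0.le hp1.le
  by_cases hin : m + i + 1 ≤ n
  swap
  · rw [binomialPMF_eq_zero_of_lt n p (by omega)]
    exact hb0 _
  by_cases hC : (2 * p - 1) * (i + 1) ^ 2 ≤ p ^ 2 * (2 * n * (1 - p) + 1)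
  · have hC' : (2 * p - 1) * (i : ℝ) ^ 2 ≤ p ^ 2 * (2 * n * (1 - p) + 1) := by
      nlinarith [(Nat.cast_nonneg i : (0 : ℝ) ≤ i)]
    exact absurd h (not_le.2 (binomialPMF_mean_pair_lt hp0 hp1 hm hm0 (by omega) (by omega) hC'))
  obtain ⟨ha, hb⟩ := binomialPMF_mean_pair_mul_eq hm (i := i) (by omega) (by omega)
  have hnmi : (0 : ℝ) ≤ n - m - i := by
    have : ((m + i : ℕ) : ℝ) ≤ n := by exact_mod_cast (show m + i ≤ n by omega)
    push_cast at this; linarith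
  have hK : (0 : ℝ) < (m + i + 1) * (1 - p) * ((n - m + i + 2) * p) := by
    have : (0 : ℝ) < 1 - p := by linarith
    have : (0 : ℝ) < n - m + i + 2 := by linarith
    positivity
  refine le_of_mul_le_mul_right (a := (m + i + 1) * (1 - p) * ((n - m + i + 2) * p)) ?_ hK
  rw [ha, hb]
  calc _ ≤ binomialPMF n p (m - 1 - i) * ((n - m - i) * (n - m + i + 2) * p ^ 2) :=
        mul_le_mul_of_nonneg_right h (mul_nonneg (mul_nonneg hnmi (by linarith)) (sq_nonneg p))
    _ ≤ _ := mul_le_mul_of_nonneg_left (by linarith) (hb0 _)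

theorem sum_range_odd_mul_binomialPMF_mean_pair_sub (hm : (m : ℝ) = n * p) (hnm : n < m + m) :
    ∑ i ∈ range m, (2 * i + 1) * (binomialPMF n p (m + i) - binomialPMF n p (m - 1 - i)) = 1 := by
  have hterm : ∀ i ∈ range m,
      (2 * i + 1) * (binomialPMF n p (m + i) - binomialPMF n p (m - 1 - i)) =
        (2 * ((m + i : ℕ) : ℝ) - 2 * m + 1) * binomialPMF n p (m + i) +
          (2 * ((m - 1 - i : ℕ) : ℝ) - 2 * m + 1) * binomialPMF n p (m - 1 - i) := by
    intro i hi
    rw [Nat.cast_sub (by simp at hi; omega), Nat.cast_sub (by simp at hi; omega)]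
    push_cast; ring
  rw [sum_congr rfl hterm,
    sum_range_add_reflect (fun k => (2 * (k : ℝ) - 2 * m + 1) * binomialPMF n p k),
    sum_range_mul_binomialPMF_of_le n p _ hnm]
  simp only [sub_mul, add_mul, sum_add_distrib, sum_sub_distrib, one_mul, ← mul_sum, mul_assoc,
    sum_mul_binomialPMF, sum_binomialPMF]
  rw [hm]; ring

theorem sum_range_binomialPMF_lt_sum_mean_add (hp0 : 0 < p) (hp1 : p < 1)
    (hm : (m : ℝ) = n * p) (hm0 : 0 < m) :
    ∑ k ∈ range m, binomialPMF n p k < ∑ i ∈ range m, binomialPMF n p (m + i) := by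
  rw [← sum_range_reflect, ← sub_pos, ← sum_sub_distrib]
  have hn : (0 : ℝ) ≤ n := Nat.cast_nonneg n
  rcases le_or_gt p (1 / 2) with hp | hp
  · have h2m : m + m ≤ n := by
      have : ((m + m : ℕ) : ℝ) ≤ n := by push_cast; rw [hm]; nlinarith
      exact_mod_cast this
    refine sum_pos (fun i hi => sub_pos.2 ?_) (nonempty_range_iff.2 hm0.ne')
    have hi := mem_range.1 hi
    refine binomialPMF_mean_pair_lt hp0 hp1 hm hm0 hi (by omega) ?_
    have : 0 ≤ 2 * (n : ℝ) * (1 - p) + 1 := by nlinarith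
    nlinarith [sq_nonneg (i : ℝ), sq_nonneg p]
  · have hnm : n < m + m := by
      have : (0 : ℝ) < m := by exact_mod_cast hm0
      have : (n : ℝ) < ((m + m : ℕ) : ℝ) := by push_cast; rw [hm]; nlinarith
      exact_mod_cast this
    refine sum_range_pos_of_sign_change (w := fun i => 2 * i + 1) (fun i j hij => by
      dsimp only; gcongr) (fun i => by positivity) (fun i hi h => ?_) ?_
    · simpa [sub_nonpos] using
        binomialPMF_mean_pair_le_succ hp0 hp1 hm hm0 hp hi (by simpa [sub_nonpos] using h)
    · rw [sum_range_odd_mul_binomialPMF_mean_pair_sub hm hnm]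
      exact one_pos

end IntegerMean

theorem binomial_integer_mean_ge_mean_gt_half
    (n : ℕ) (hn : 0 < n) (p : ℝ) (hp : 0 < p) (hp1 : p < 1)
    (m : ℕ) (hm : (m : ℝ) = n * p) :
    (∑ k ∈ (Finset.range (n + 1)).filter (fun (k : ℕ) => (n : ℝ) * p ≤ (k : ℝ)),
        binomialPMF n p k) > 1 / 2 := by
  have hm0 : 0 < m := by
    have : (0 : ℝ) < m := hm ▸ mul_pos (Nat.cast_pos.2 hn) hp
    exact_mod_cast this
  have hmn : m < n := by
    have : (m : ℝ) < n := hm ▸ (mul_lt_iff_lt_one_right (Nat.cast_pos.2 hn)).2 hp1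
    exact_mod_cast this
  have hbelow : (range (n + 1)).filter (fun k : ℕ => ¬ (n : ℝ) * p ≤ k) = range m := by
    ext k
    simp only [mem_filter, mem_range, ← hm, not_le, Nat.cast_lt]
    omega
  have hsplit := sum_filter_add_sum_filter_not (range (n + 1)) (fun k : ℕ => (n : ℝ) * p ≤ k)
    (binomialPMF n p)
  rw [hbelow, sum_binomialPMF] at hsplit
  have hpair := sum_range_binomialPMF_lt_sum_mean_add hp hp1 hm hm0
  have htot : ∑ k ∈ range m, binomialPMF n p k + ∑ i ∈ range m, binomialPMF n p (m + i) ≤ 1 := by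
    rw [← sum_range_add]
    exact sum_range_binomialPMF_le_one hp.le hp1.le _
  linarith
end

section
/- For any real random variable Z with E[Z] = 0 and finite nonzero second moment, P[Z ≥ 0] ≥ (E[|Z|])² / (4 · E[Z²]). -/
/-!
Since `E Z = 0`, `E |Z| = 2 E[Z; Z ≥ 0]`, and Cauchy–Schwarz on the event `{Z ≥ 0}` gives
`E[Z; Z ≥ 0] ^ 2 ≤ P(Z ≥ 0) · E[Z ^ 2]`.
-/

open MeasureTheory

namespace MeasureTheory

variable {α : Type*} [MeasurableSpace α] {μ : Measure α} {f : α → ℝ}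

theorem integral_abs_eq_two_mul_setIntegral_nonneg_sub_integral (hf : Integrable f μ) :
    ∫ x, |f x| ∂μ = 2 * ∫ x in {x | 0 ≤ f x}, f x ∂μ - ∫ x, f x ∂μ := by
  have hA : NullMeasurableSet {x | 0 ≤ f x} μ :=
    aestronglyMeasurable_const.nullMeasurableSet_le hf.1
  have habs : ∀ x, |f x| = 2 * {x | 0 ≤ f x}.indicator f x - f x := by
    intro x
    by_cases hx : 0 ≤ f x
    · simp only [Set.indicator_of_mem (show x ∈ {x | 0 ≤ f x} from hx), abs_of_nonneg hx]
      ring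
    · simp only [Set.indicator_of_notMem (show x ∉ {x | 0 ≤ f x} from hx),
        abs_of_neg (not_le.mp hx)]
      ring
  simp_rw [habs]
  rw [integral_sub ((hf.indicator₀ hA).const_mul 2) hf, integral_const_mul,
    integral_indicator₀ hA]

theorem sq_integral_le_measureReal_univ_mul_integral_sq [IsFiniteMeasure μ] (hf : MemLp f 2 μ) :
    (∫ x, f x ∂μ) ^ 2 ≤ μ.real Set.univ * ∫ x, f x ^ 2 ∂μ := by
  have hf₁ : Integrable f μ := hf.integrable one_le_two
  -- `t ↦ ∫ (f - t) ^ 2` is a nonnegative quadratic, so its discriminant is nonpositive.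
  have hquad : ∀ t : ℝ,
      0 ≤ μ.real Set.univ * (t * t) + (-2 * ∫ x, f x ∂μ) * t + ∫ x, f x ^ 2 ∂μ := by
    intro t
    have hexpand : ∀ x, (f x - t) ^ 2 = f x ^ 2 + (-2 * t) * f x + t ^ 2 := fun x => by ring
    have hnonneg : 0 ≤ ∫ x, (f x - t) ^ 2 ∂μ := integral_nonneg fun x => sq_nonneg _
    simp_rw [hexpand] at hnonneg
    have hlin : Integrable (fun x => f x ^ 2 + (-2 * t) * f x) μ :=
      hf.integrable_sq.add (hf₁.const_mul _)
    rw [integral_add hlin (integrable_const _), integral_add hf.integrable_sq (hf₁.const_mul _),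
      integral_const_mul, integral_const,
      smul_eq_mul] at hnonneg
    linarith
  have hdisc := discrim_le_zero hquad
  rw [discrim] at hdisc
  linarith

end MeasureTheory

theorem prob_nonneg_ge_of_mean_zero_general
    {Ω : Type*} [MeasurableSpace Ω] (μ : Measure Ω) [IsProbabilityMeasure μ]
    (Z : Ω → ℝ)
    (hint : Integrable Z μ) (hsq : Integrable (fun ω => Z ω ^ 2) μ)
    (hmean : ∫ ω, Z ω ∂μ = 0) :
    (μ {ω | 0 ≤ Z ω}).toReal ≥ (∫ ω, |Z ω| ∂μ) ^ 2 / (4 * ∫ ω, Z ω ^ 2 ∂μ) := by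
  set A : Set Ω := {ω | 0 ≤ Z ω}
  have hZ2 : MemLp Z 2 μ := (memLp_two_iff_integrable_sq hint.1).2 hsq
  have habs : ∫ ω, |Z ω| ∂μ = 2 * ∫ ω in A, Z ω ∂μ := by
    rw [integral_abs_eq_two_mul_setIntegral_nonneg_sub_integral hint, hmean, sub_zero]
  have hCS : (∫ ω in A, Z ω ∂μ) ^ 2 ≤ μ.real A * ∫ ω in A, Z ω ^ 2 ∂μ := by
    simpa using sq_integral_le_measureReal_univ_mul_integral_sq (hZ2.restrict A)
  have hrestrict : ∫ ω in A, Z ω ^ 2 ∂μ ≤ ∫ ω, Z ω ^ 2 ∂μ :=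
    setIntegral_le_integral hsq (ae_of_all _ fun ω => sq_nonneg _)
  have hsq_nonneg : 0 ≤ ∫ ω, Z ω ^ 2 ∂μ := integral_nonneg fun ω => sq_nonneg _
  rw [ge_iff_le, ← measureReal_def]
  refine div_le_of_le_mul₀ (by positivity) measureReal_nonneg ?_
  calc (∫ ω, |Z ω| ∂μ) ^ 2 = 4 * (∫ ω in A, Z ω ∂μ) ^ 2 := by rw [habs]; ring
    _ ≤ 4 * (μ.real A * ∫ ω, Z ω ^ 2 ∂μ) := by gcongr; exact hCS.trans (by gcongr)
    _ = μ.real A * (4 * ∫ ω, Z ω ^ 2 ∂μ) := by ring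

theorem prob_nonneg_ge_of_mean_zero
    {Ω : Type*} [MeasurableSpace Ω] (μ : Measure Ω) [IsProbabilityMeasure μ]
    (Z : Ω → ℝ) (hZ : Measurable Z)
    (hint : Integrable Z μ) (hsq : Integrable (fun ω => Z ω ^ 2) μ)
    (hmean : ∫ ω, Z ω ∂μ = 0) (hpos : 0 < ∫ ω, Z ω ^ 2 ∂μ) :
    (μ {ω | 0 ≤ Z ω}).toReal ≥ (∫ ω, |Z ω| ∂μ) ^ 2 / (4 * ∫ ω, Z ω ^ 2 ∂μ) :=
  prob_nonneg_ge_of_mean_zero_general μ Z hint hsq hmean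
end

section
/- Let n ≥ 2 be an integer and p ∈ [1/n, 1 − 1/n]. If X ~ Bin(n,p), then E[|X − np|] ≥ √(np(1−p)/2). -/
open Finset Real

noncomputable def deMoivreTerm (n : ℕ) (p : ℝ) (k : ℕ) : ℝ :=
  k * n.choose k * p ^ k * (1 - p) ^ (n - k + 1)

section DeMoivre

variable (n : ℕ) (p : ℝ)

theorem deMoivreTerm_eq_mul_binomialPMF (k : ℕ) :
    deMoivreTerm n p k = k * (1 - p) * binomialPMF n p k := by
  rcases le_or_gt k n with hk | hk
  · simp only [deMoivreTerm, binomialPMF, pow_succ]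
    ring
  · simp [deMoivreTerm, binomialPMF, Nat.choose_eq_zero_of_lt hk]

theorem deMoivreTerm_succ_eq_mul_binomialPMF (k : ℕ) :
    deMoivreTerm n p (k + 1) = (n - k) * p * binomialPMF n p k := by
  rcases lt_or_ge k n with hk | hk
  · have hchoose : ((n.choose (k + 1) : ℕ) : ℝ) * (k + 1) = n.choose k * (n - k) := by
      rw [← Nat.cast_sub hk.le]
      exact_mod_cast Nat.choose_succ_right_eq n k
    simp only [deMoivreTerm, binomialPMF, show n - (k + 1) + 1 = n - k by omega, pow_succ]
    push_cast
    linear_combination p ^ k * p * (1 - p) ^ (n - k) * hchoose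
  · rcases hk.eq_or_lt with rfl | hk
    · simp [deMoivreTerm]
    · simp [deMoivreTerm, binomialPMF, Nat.choose_eq_zero_of_lt, hk, hk.trans (Nat.lt_succ_self k)]

theorem deMoivreTerm_zero : deMoivreTerm n p 0 = 0 := by simp [deMoivreTerm]

theorem deMoivreTerm_eq_zero_of_lt {k : ℕ} (hk : n < k) : deMoivreTerm n p k = 0 := by
  simp [deMoivreTerm, Nat.choose_eq_zero_of_lt hk]

theorem sub_mul_binomialPMF_eq_deMoivreTerm_sub (k : ℕ) :
    (k - n * p) * binomialPMF n p k = deMoivreTerm n p k - deMoivreTerm n p (k + 1) := by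
  rw [deMoivreTerm_eq_mul_binomialPMF, deMoivreTerm_succ_eq_mul_binomialPMF]
  ring

theorem sum_range_sub_mul_binomialPMF (m : ℕ) :
    ∑ k ∈ range m, (k - n * p) * binomialPMF n p k = -deMoivreTerm n p m := by
  simp_rw [sub_mul_binomialPMF_eq_deMoivreTerm_sub, sum_range_sub', deMoivreTerm_zero, zero_sub]

theorem sum_abs_sub_mul_binomialPMF (hp₀ : 0 ≤ p) (hp₁ : p ≤ 1) :
    ∑ k ∈ range (n + 1), |(k : ℝ) - n * p| * binomialPMF n p k
      = 2 * deMoivreTerm n p (⌊n * p⌋₊ + 1) := by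
  set a := ⌊n * p⌋₊ + 1
  have ha : a ≤ n + 1 := by
    have : ⌊n * p⌋₊ ≤ n := Nat.floor_le_of_le (mul_le_of_le_one_right n.cast_nonneg hp₁)
    omega
  have hbelow : ∀ k ∈ range a, |(k : ℝ) - n * p| * binomialPMF n p k
      = -((k - n * p) * binomialPMF n p k) := by
    intro k hk
    have : (k : ℝ) ≤ n * p :=
      Nat.le_floor_iff (by positivity) |>.mp (Nat.lt_succ_iff.mp (mem_range.mp hk))
    rw [abs_of_nonpos (by linarith), neg_mul]
  have habove : ∀ k ∈ Ico a (n + 1), |(k : ℝ) - n * p| * binomialPMF n p k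
      = (k - n * p) * binomialPMF n p k := by
    intro k hk
    have : n * p ≤ (k : ℝ) :=
      (Nat.lt_floor_add_one _).le.trans (by exact_mod_cast (mem_Ico.mp hk).1)
    rw [abs_of_nonneg (by linarith)]
  rw [← sum_range_add_sum_Ico _ ha, sum_congr rfl hbelow, sum_congr rfl habove, sum_neg_distrib,
    sum_Ico_eq_sub _ ha, sum_range_sub_mul_binomialPMF, sum_range_sub_mul_binomialPMF,
    deMoivreTerm_eq_zero_of_lt n p (Nat.lt_succ_self n)]
  ring

end DeMoivre

theorem two_mul_add_one_mul_log_one_add_inv_antitoneOn :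
    AntitoneOn (fun x : ℝ ↦ (2 * x + 1) * log (1 + x⁻¹)) (Set.Ioi 0) := by
  intro a (ha : 0 < a) b (hb : 0 < b) hab
  have hsum : ∀ x : ℝ, 0 < x →
      HasSum (fun k : ℕ ↦ 2 * (1 / (2 * k + 1)) * (1 / (2 * x + 1)) ^ (2 * k))
        ((2 * x + 1) * log (1 + x⁻¹)) := by
    intro x hx
    have h := (hasSum_log_one_add_inv hx).mul_left (2 * x + 1)
    have hx' : 2 * x + 1 ≠ 0 := by positivity
    simpa only [pow_succ, ← mul_assoc, mul_comm _ (1 / (2 * x + 1)), one_div_mul_cancel hx',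
      one_mul] using h
  refine hasSum_le (fun k ↦ ?_) (hsum b hb) (hsum a ha)
  gcongr

theorem succ_pow_mul_pow_le_pow_mul_succ_pow {a b : ℕ} (ha : 0 < a) (hab : a ≤ b) :
    ((b : ℝ) + 1) ^ (2 * b + 1) * (a : ℝ) ^ (2 * a + 1)
      ≤ (b : ℝ) ^ (2 * b + 1) * ((a : ℝ) + 1) ^ (2 * a + 1) := by
  have ha' : (0 : ℝ) < a := by exact_mod_cast ha
  have hb' : (0 : ℝ) < b := by exact_mod_cast ha.trans_le hab
  have hlog := two_mul_add_one_mul_log_one_add_inv_antitoneOn ha' hb' (by exact_mod_cast hab)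
  have hpow : (1 + (b : ℝ)⁻¹) ^ (2 * b + 1) ≤ (1 + (a : ℝ)⁻¹) ^ (2 * a + 1) := by
    rw [← log_le_log_iff (by positivity) (by positivity), log_pow, log_pow]
    push_cast
    exact hlog
  have hinv : ∀ x : ℝ, 0 < x → 1 + x⁻¹ = (x + 1) / x := fun x hx ↦ by field_simp
  rw [hinv a ha', hinv b hb', div_pow, div_pow, div_le_div_iff₀ (by positivity) (by positivity)]
    at hpow
  linarith

theorem pow_le_eight_mul_choose_sq {k j : ℕ} (hk : 0 < k) (hj : 0 < j) :
    ((k + j : ℕ) : ℝ) ^ (2 * (k + j) + 1)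
      ≤ 8 * ((k + j).choose k : ℝ) ^ 2 * (k : ℝ) ^ (2 * k + 1) * (j : ℝ) ^ (2 * j + 1) := by
  induction k, hk using Nat.le_induction with
  | base =>
    have hmono := succ_pow_mul_pow_le_pow_mul_succ_pow Nat.one_pos hj
    simp only [Nat.succ_eq_add_one, zero_add, Nat.choose_one_right] at hmono ⊢
    push_cast at hmono ⊢
    calc (1 + (j : ℝ)) ^ (2 * (1 + j) + 1)
        = ((j : ℝ) + 1) ^ 2 * (((j : ℝ) + 1) ^ (2 * j + 1) * 1 ^ 3) := by ring
      _ ≤ ((j : ℝ) + 1) ^ 2 * ((j : ℝ) ^ (2 * j + 1) * (1 + 1) ^ 3) :=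
          mul_le_mul_of_nonneg_left hmono (by positivity)
      _ = _ := by ring
  | succ k hk ih =>
    set N := k + j
    have hmono : ((N : ℝ) + 1) ^ (2 * N + 1) * (k : ℝ) ^ (2 * k + 1)
        ≤ (N : ℝ) ^ (2 * N + 1) * ((k : ℝ) + 1) ^ (2 * k + 1) :=
      succ_pow_mul_pow_le_pow_mul_succ_pow hk (Nat.le_add_right k j)
    have hchoose : ((N + 1).choose (k + 1) : ℝ) * (k + 1) = N.choose k * (N + 1) := by
      exact_mod_cast ((mul_comm _ _).trans (Nat.add_one_mul_choose_eq N k)).symm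
    rw [show k + 1 + j = N + 1 by omega]
    push_cast
    have hk' : (0 : ℝ) < (k : ℝ) ^ (2 * k + 1) := by positivity
    refine le_of_mul_le_mul_left ?_ hk'
    calc (k : ℝ) ^ (2 * k + 1) * ((N : ℝ) + 1) ^ (2 * (N + 1) + 1)
        = ((N : ℝ) + 1) ^ 2 * (((N : ℝ) + 1) ^ (2 * N + 1) * (k : ℝ) ^ (2 * k + 1)) := by ring
      _ ≤ ((N : ℝ) + 1) ^ 2 * ((N : ℝ) ^ (2 * N + 1) * ((k : ℝ) + 1) ^ (2 * k + 1)) :=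
          mul_le_mul_of_nonneg_left hmono (by positivity)
      _ ≤ ((N : ℝ) + 1) ^ 2 * ((8 * (N.choose k : ℝ) ^ 2 * (k : ℝ) ^ (2 * k + 1)
            * (j : ℝ) ^ (2 * j + 1)) * ((k : ℝ) + 1) ^ (2 * k + 1)) := by gcongr
      _ = (k : ℝ) ^ (2 * k + 1) * (8 * ((N + 1).choose (k + 1) * ((k : ℝ) + 1)) ^ 2
            * ((k : ℝ) + 1) ^ (2 * k + 1) * (j : ℝ) ^ (2 * j + 1)) := by rw [hchoose]; ring
      _ = _ := by ring

theorem min_le_pow_mul_one_sub_pow (α β : ℕ) {L R x : ℝ} (hL : 0 < L) (hR : R < 1)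
    (hLx : L ≤ x) (hxR : x ≤ R) :
    min (L ^ α * (1 - L) ^ β) (R ^ α * (1 - R) ^ β) ≤ x ^ α * (1 - x) ^ β := by
  set g : ℝ → ℝ := fun y ↦ α * log y + β * log (1 - y)
  have hlog : ConcaveOn ℝ (Set.Ioo 0 1) log :=
    strictConcaveOn_log_Ioi.concaveOn.subset Set.Ioo_subset_Ioi_self (convex_Ioo 0 1)
  have hlog_one_sub : ConcaveOn ℝ (Set.Ioo 0 1) (fun y ↦ log (1 - y)) := by
    have := strictConcaveOn_log_Ioi.concaveOn.comp_affineMap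
      (AffineMap.const ℝ ℝ (1 : ℝ) - AffineMap.id ℝ ℝ)
    refine this.subset (fun y hy ↦ ?_) (convex_Ioo 0 1)
    simp only [Set.mem_preimage, AffineMap.coe_sub, Pi.sub_apply, AffineMap.const_apply,
      AffineMap.id_apply, Set.mem_Ioi]
    linarith [hy.2]
  have hg : ConcaveOn ℝ (Set.Ioo 0 1) g :=
    (hlog.smul (Nat.cast_nonneg α)).add (hlog_one_sub.smul (Nat.cast_nonneg β))
  have hexp : ∀ y ∈ Set.Ioo (0 : ℝ) 1, y ^ α * (1 - y) ^ β = exp (g y) := by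
    rintro y ⟨hy₀, hy₁⟩
    have : 0 < 1 - y := by linarith
    rw [exp_add, ← log_pow, ← log_pow, exp_log (by positivity), exp_log (by positivity)]
  have hLmem : L ∈ Set.Ioo (0 : ℝ) 1 := ⟨hL, by linarith⟩
  have hRmem : R ∈ Set.Ioo (0 : ℝ) 1 := ⟨by linarith, hR⟩
  have hxmem : x ∈ Set.Ioo (0 : ℝ) 1 := ⟨by linarith, by linarith⟩
  rw [hexp L hLmem, hexp R hRmem, hexp x hxmem, ← exp_monotone.map_min, exp_le_exp]
  exact hg.ge_on_segment hLmem hRmem (by rw [segment_eq_Icc (hLx.trans hxR)]; exact ⟨hLx, hxR⟩)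

theorem one_le_eight_mul_variance_mul_binomialPMF_sq {n k : ℕ} (hk : 0 < k) (hkn : k < n) :
    1 ≤ 8 * (n * (k / n) * (1 - k / n)) * binomialPMF n (k / n) k ^ 2 := by
  obtain ⟨j, rfl⟩ := Nat.exists_eq_add_of_le hkn.le
  have hj : 0 < j := by omega
  set N : ℝ := ((k + j : ℕ) : ℝ)
  have hN : 0 < N := by positivity
  have hq : 1 - k / N = j / N := by
    field_simp; simp [N]
  have hrewrite : 8 * (N * (k / N) * (j / N)) * ((k + j).choose k * (k / N) ^ k * (j / N) ^ j) ^ 2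
      = 8 * ((k + j).choose k : ℝ) ^ 2 * (k : ℝ) ^ (2 * k + 1) * (j : ℝ) ^ (2 * j + 1)
        / N ^ (2 * (k + j) + 1) := by
    rw [div_pow, div_pow]
    field_simp
    ring
  rw [binomialPMF, hq, Nat.add_sub_cancel_left, hrewrite, one_le_div (by positivity)]
  exact pow_le_eight_mul_choose_sq hk hj

theorem deMoivreTerm_succ_div_self {n : ℕ} (hn : 0 < n) (k : ℕ) :
    deMoivreTerm n (k / n) (k + 1) = deMoivreTerm n (k / n) k := by
  rw [deMoivreTerm_succ_eq_mul_binomialPMF, deMoivreTerm_eq_mul_binomialPMF]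
  field_simp

theorem le_eight_mul_deMoivreTerm_div_self_sq {n k : ℕ} (hk : 0 < k) (hkn : k < n) :
    n * (k / n) * (1 - k / n) ≤ 8 * deMoivreTerm n (k / n) k ^ 2 := by
  have hn : (0 : ℝ) < n := by exact_mod_cast hk.trans hkn
  have hvar : 0 ≤ (n : ℝ) * (k / n) * (1 - k / n) := by
    have : (k : ℝ) / n ≤ 1 := by rw [div_le_one hn]; exact_mod_cast hkn.le
    have := sub_nonneg.2 this
    positivity
  have hT : deMoivreTerm n (k / n) k = n * (k / n) * (1 - k / n) * binomialPMF n (k / n) k := by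
    rw [deMoivreTerm_eq_mul_binomialPMF]
    field_simp
  have hlattice := one_le_eight_mul_variance_mul_binomialPMF_sq hk hkn
  rw [hT]
  nlinarith

theorem mul_mul_one_sub_le_eight_mul_deMoivreTerm_sq {n k : ℕ} (hk : 0 < k) (hkn : k + 1 < n)
    {p : ℝ} (hL : k / n ≤ p) (hR : p ≤ (k + 1) / n) :
    n * p * (1 - p) ≤ 8 * deMoivreTerm n p (k + 1) ^ 2 := by
  obtain ⟨j, rfl⟩ := Nat.exists_eq_add_of_le hkn.le
  set N := k + 1 + j
  have hN : (0 : ℝ) < N := by positivity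
  set c : ℝ := 8 * ((k + 1) * N.choose (k + 1) : ℝ) ^ 2 with hc
  have hreduce : ∀ y : ℝ, 0 < y → y < 1 →
      (N * y * (1 - y) ≤ 8 * deMoivreTerm N y (k + 1) ^ 2
        ↔ N ≤ c * (y ^ (2 * k + 1) * (1 - y) ^ (2 * j + 1))) := by
    intro y hy₀ hy₁
    have hT : 8 * deMoivreTerm N y (k + 1) ^ 2
        = y * (1 - y) * (c * (y ^ (2 * k + 1) * (1 - y) ^ (2 * j + 1))) := by
      rw [deMoivreTerm, show N - (k + 1) + 1 = j + 1 by omega, hc]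
      push_cast
      ring
    rw [hT, show (N : ℝ) * y * (1 - y) = y * (1 - y) * N by ring,
      mul_le_mul_iff_right₀ (mul_pos hy₀ (by linarith))]
  have hL₀ : 0 < (k : ℝ) / N := by positivity
  have hL₁ : (k : ℝ) / N < 1 := by rw [div_lt_one hN]; exact_mod_cast (by omega : k < N)
  have hR₀ : 0 < ((k + 1 : ℕ) : ℝ) / N := by positivity
  have hR₁ : ((k + 1 : ℕ) : ℝ) / N < 1 := by
    rw [div_lt_one hN]; exact_mod_cast (by omega : k + 1 < N)
  have hbound_left := (hreduce _ hL₀ hL₁).mp <| by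
    rw [deMoivreTerm_succ_div_self (by omega)]
    exact le_eight_mul_deMoivreTerm_div_self_sq hk (by omega)
  have hbound_right := (hreduce _ hR₀ hR₁).mp <|
    le_eight_mul_deMoivreTerm_div_self_sq (Nat.succ_pos k) (by omega)
  have hp := min_le_pow_mul_one_sub_pow (2 * k + 1) (2 * j + 1) hL₀ hR₁ hL
    (by push_cast; exact hR)
  refine (hreduce p (hL₀.trans_le hL) (by push_cast at hR₁; linarith)).mpr ?_
  calc (N : ℝ) ≤ min _ _ := le_min hbound_left hbound_right
    _ = c * min _ _ := (mul_min_of_nonneg _ _ (by positivity)).symm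
    _ ≤ _ := mul_le_mul_of_nonneg_left hp (by positivity)

theorem mul_mul_one_sub_le_eight_mul_deMoivreTerm_floor_sq {n : ℕ} (hn : 0 < n) {p : ℝ}
    (hp : 1 / n ≤ p) (hp1 : p ≤ 1 - 1 / n) :
    n * p * (1 - p) ≤ 8 * deMoivreTerm n p (⌊n * p⌋₊ + 1) ^ 2 := by
  have hn' : (0 : ℝ) < n := by exact_mod_cast hn
  have hnp₁ : 1 ≤ n * p := by rwa [div_le_iff₀' hn'] at hp
  have hnp₂ : n * p ≤ n - 1 := by
    have := mul_le_mul_of_nonneg_left hp1 hn'.le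
    rwa [mul_sub, mul_one, mul_one_div_cancel hn'.ne'] at this
  set k := ⌊n * p⌋₊
  have hfloor : (k : ℝ) ≤ n * p := Nat.floor_le (by linarith)
  have hk : 0 < k := Nat.floor_pos.mpr hnp₁
  have hkn : k + 1 ≤ n := by
    have : (k : ℝ) + 1 ≤ n := by linarith
    exact_mod_cast this
  have hL : k / n ≤ p := by rw [div_le_iff₀' hn']; exact hfloor
  rcases hkn.lt_or_eq with hlt | heq
  · refine mul_mul_one_sub_le_eight_mul_deMoivreTerm_sq hk hlt hL ?_
    rw [le_div_iff₀' hn']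
    exact (Nat.lt_floor_add_one _).le
  · have hp_eq : p = k / n := by
      refine le_antisymm ?_ hL
      have : (n : ℝ) = k + 1 := by exact_mod_cast heq.symm
      rw [le_div_iff₀' hn']
      linarith
    rw [hp_eq, deMoivreTerm_succ_div_self hn]
    exact le_eight_mul_deMoivreTerm_div_self_sq hk (by omega)

theorem binomial_mad_lower_bound
    (n : ℕ) (hn : 2 ≤ n) (p : ℝ)
    (hp : 1 / (n : ℝ) ≤ p) (hp1 : p ≤ 1 - 1 / (n : ℝ)) :
    ∑ k ∈ Finset.range (n + 1), |(k : ℝ) - n * p| * binomialPMF n p k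
      ≥ Real.sqrt (n * p * (1 - p) / 2) := by
  have hp₀ : 0 ≤ p := (by positivity : (0 : ℝ) ≤ 1 / n).trans hp
  have hp₁ : p ≤ 1 := hp1.trans (sub_le_self 1 (by positivity))
  have hT : 0 ≤ deMoivreTerm n p (⌊n * p⌋₊ + 1) := by
    have := sub_nonneg.2 hp₁
    rw [deMoivreTerm]
    positivity
  have hvar := mul_mul_one_sub_le_eight_mul_deMoivreTerm_floor_sq (by omega) hp hp1
  rw [sum_abs_sub_mul_binomialPMF n p hp₀ hp₁, ge_iff_le, Real.sqrt_le_left (by positivity)]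
  linarith
end

section
/- Fix a positive integer n, reals 0 < p < q < 1, integers k ∈ {0,…,n} and t ∈ {1,…,n−k}. If X_p ~ Bin(n,p) and X_q ~ Bin(n,q), then P[X_p ≥ k+t | X_p ≥ k] ≤ P[X_q ≥ k+t | X_q ≥ k]. -/
/-- The upper tail `P[Bin(n,p) ≥ m]`. -/
noncomputable def binomialTail (n : ℕ) (p : ℝ) (m : ℕ) : ℝ :=
  ∑ j ∈ Finset.Icc m n, binomialPMF n p j

/-!
Binomial laws are ordered by likelihood ratio: for `j ≤ i` and `p ≤ q`,
`P[X_p = i] P[X_q = j] ≤ P[X_q = i] P[X_p = j]`, since the ratio of the two sides is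
`(p(1-q) / (q(1-p)))^(i-j)`. Summing this over `i ≥ k + t > j ≥ k` compares the mass above
`k + t` with the mass in `[k, k + t)` for the two laws, which is the cross-multiplied form of the
claim once the tails at `k` are split at `k + t`.
-/

open Finset

theorem sum_Icc_mul_sum_Icc_le_of_ratio_mono {f g : ℕ → ℝ} {n : ℕ}
    (hfg : ∀ i ≤ n, ∀ j ≤ i, f i * g j ≤ g i * f j) {m m' : ℕ} (hm : m ≤ m') :
    (∑ i ∈ Icc m' n, f i) * (∑ j ∈ Icc m n, g j)
      ≤ (∑ i ∈ Icc m' n, g i) * (∑ j ∈ Icc m n, f j) := by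
  have hsplit : ∀ h : ℕ → ℝ, ∑ j ∈ Icc m n, h j
      = ∑ j ∈ Icc m n with j < m', h j + ∑ i ∈ Icc m' n, h i := by
    intro h
    rw [← sum_filter_add_sum_filter_not _ (· < m')]
    congr 2
    ext i
    simp only [mem_filter, mem_Icc, not_lt]
    omega
  have hcross : (∑ i ∈ Icc m' n, f i) * ∑ j ∈ Icc m n with j < m', g j
      ≤ (∑ i ∈ Icc m' n, g i) * ∑ j ∈ Icc m n with j < m', f j := by
    rw [sum_mul_sum, sum_mul_sum]
    refine sum_le_sum fun i hi => sum_le_sum fun j hj => ?_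
    rw [mem_Icc] at hi
    rw [mem_filter] at hj
    exact hfg i hi.2 j (by omega)
  rw [hsplit f, hsplit g]
  linarith

theorem binomialPMF_nonneg_s10 {p : ℝ} (hp₀ : 0 ≤ p) (hp₁ : p ≤ 1) (n j : ℕ) :
    0 ≤ binomialPMF n p j := by
  unfold binomialPMF
  have : 0 ≤ 1 - p := by linarith
  positivity

theorem binomialTail_pos {p : ℝ} (hp₀ : 0 < p) (hp₁ : p ≤ 1) {n m : ℕ} (hm : m ≤ n) :
    0 < binomialTail n p m := by
  refine sum_pos' (fun j _ => binomialPMF_nonneg_s10 hp₀.le hp₁ n j) ⟨n, by simp [hm], ?_⟩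
  simp [binomialPMF, hp₀]

theorem binomialPMF_mul_le {p q : ℝ} (hp : 0 ≤ p) (hpq : p ≤ q) (hq : q ≤ 1)
    {n i j : ℕ} (hin : i ≤ n) (hji : j ≤ i) :
    binomialPMF n p i * binomialPMF n q j ≤ binomialPMF n q i * binomialPMF n p j := by
  obtain ⟨d, rfl⟩ := Nat.exists_eq_add_of_le hji
  set c : ℝ := (n.choose (j + d)) * (n.choose j) * (p * q) ^ j
    * ((1 - p) * (1 - q)) ^ (n - (j + d)) with hc
  have hnj : n - j = n - (j + d) + d := by omega
  have hfactor : ∀ a b : ℝ, binomialPMF n a (j + d) * binomialPMF n b j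
      = (n.choose (j + d)) * (n.choose j) * (a * b) ^ j * ((1 - a) * (1 - b)) ^ (n - (j + d))
        * (a * (1 - b)) ^ d := by
    intro a b
    simp only [binomialPMF, hnj, mul_pow, pow_add]
    ring
  have hc_nonneg : 0 ≤ c :=
    mul_nonneg (mul_nonneg (by positivity) (pow_nonneg (mul_nonneg hp (hp.trans hpq)) _))
      (pow_nonneg (mul_nonneg (by linarith) (by linarith)) _)
  rw [hfactor, hfactor, mul_comm q p, mul_comm (1 - q) (1 - p), ← hc]
  exact mul_le_mul_of_nonneg_left
    (pow_le_pow_left₀ (mul_nonneg hp (by linarith)) (by nlinarith) d) hc_nonneg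

theorem binomial_cond_tail_monotone_general
    (n : ℕ) (p q : ℝ) (hp : 0 < p) (hpq : p < q) (hq : q < 1)
    (k t : ℕ) (hk : k ≤ n) :
    binomialTail n p (k + t) / binomialTail n p k
      ≤ binomialTail n q (k + t) / binomialTail n q k := by
  rw [div_le_div_iff₀ (binomialTail_pos hp (by linarith) hk)
    (binomialTail_pos (hp.trans hpq) hq.le hk)]
  exact sum_Icc_mul_sum_Icc_le_of_ratio_mono
    (fun i hi j hji => binomialPMF_mul_le hp.le hpq.le hq.le hi hji) (Nat.le_add_right k t)

/-- `P[X_p ≥ k+t | X_p ≥ k] ≤ P[X_q ≥ k+t | X_q ≥ k]` for `p < q`. -/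
theorem binomial_cond_tail_monotone
    (n : ℕ) (hn : 0 < n) (p q : ℝ) (hp : 0 < p) (hpq : p < q) (hq : q < 1)
    (k t : ℕ) (hk : k ≤ n) (ht1 : 1 ≤ t) (ht : t ≤ n - k) :
    binomialTail n p (k + t) / binomialTail n p k
      ≤ binomialTail n q (k + t) / binomialTail n q k :=
  binomial_cond_tail_monotone_general n p q hp hpq hq k t hk
end

section
/- If P_λ is a Poisson random variable with mean λ > 0, then E[|P_λ − λ|] = 2λ · e^{−λ} λ^{⌊λ⌋} / ⌊λ⌋!. -/
/-!
Since `E[P_λ] = λ`, the deviation `P_λ - λ` has mean zero, so `E|P_λ - λ| = 2 E[(P_λ - λ)⁻]`,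
and the negative part only sees the finitely many `k ≤ ⌊λ⌋`. There the identity
`k p(k) = λ p(k - 1)` makes `∑_{k ≤ n} (λ - k) p(k)` telescope to `λ p(n)`.
-/

/-- The Poisson probability mass function: `P[Poi(λ) = k]`. -/
noncomputable def poissonPMF (lam : ℝ) (k : ℕ) : ℝ :=
  Real.exp (-lam) * lam ^ k / (Nat.factorial k)

namespace poissonPMF

variable (lam : ℝ)

lemma hasSum_one : HasSum (poissonPMF lam) 1 := by
  have hexp := NormedSpace.expSeries_div_hasSum_exp lam
  rw [← Real.exp_eq_exp_ℝ] at hexp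
  have hpmf := hexp.mul_left (Real.exp (-lam))
  rw [← Real.exp_add, neg_add_cancel, Real.exp_zero] at hpmf
  exact hpmf.congr_fun fun k ↦ mul_div_assoc _ _ _

lemma succ_mul_succ (k : ℕ) :
    ((k : ℝ) + 1) * poissonPMF lam (k + 1) = lam * poissonPMF lam k := by
  simp only [poissonPMF, Nat.factorial_succ, Nat.cast_mul, Nat.cast_succ]
  field_simp
  ring

lemma hasSum_mul_self : HasSum (fun k : ℕ ↦ (k : ℝ) * poissonPMF lam k) lam := by
  have hshift : HasSum (fun k : ℕ ↦ ((k + 1 : ℕ) : ℝ) * poissonPMF lam (k + 1)) lam := by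
    simpa only [Nat.cast_succ, succ_mul_succ, mul_one] using (hasSum_one lam).mul_left lam
  simpa using (hasSum_nat_add_iff (f := fun k : ℕ ↦ (k : ℝ) * poissonPMF lam k) 1).mp hshift

lemma hasSum_sub_mul : HasSum (fun k : ℕ ↦ ((k : ℝ) - lam) * poissonPMF lam k) 0 := by
  simpa only [sub_mul, mul_one, sub_self] using
    (hasSum_mul_self lam).sub ((hasSum_one lam).mul_left lam)

lemma sum_range_succ_sub_mul (n : ℕ) :
    ∑ k ∈ Finset.range (n + 1), (lam - k) * poissonPMF lam k = lam * poissonPMF lam n := by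
  induction n with
  | zero => simp
  | succ n ih =>
    rw [Finset.sum_range_succ, ih, sub_mul, Nat.cast_succ, succ_mul_succ]
    ring

lemma hasSum_negPart_sub_mul {lam : ℝ} (hlam : 0 ≤ lam) :
    HasSum (fun k : ℕ ↦ ((k : ℝ) - lam)⁻ * poissonPMF lam k)
      (lam * poissonPMF lam ⌊lam⌋₊) := by
  have hsupp : ∀ k ∉ Finset.range (⌊lam⌋₊ + 1), ((k : ℝ) - lam)⁻ * poissonPMF lam k = 0 := by
    intro k hk
    rw [Finset.mem_range, not_lt] at hk
    have hlt : lam < k := (Nat.lt_floor_add_one lam).trans_le (by exact_mod_cast hk)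
    rw [negPart_eq_zero.mpr (sub_nonneg.mpr hlt.le), zero_mul]
  have hsum : ∑ k ∈ Finset.range (⌊lam⌋₊ + 1), ((k : ℝ) - lam)⁻ * poissonPMF lam k
      = lam * poissonPMF lam ⌊lam⌋₊ := by
    rw [← sum_range_succ_sub_mul]
    refine Finset.sum_congr rfl fun k hk ↦ ?_
    rw [Finset.mem_range, Nat.lt_succ_iff] at hk
    have hle : (k : ℝ) ≤ lam := (Nat.cast_le.mpr hk).trans (Nat.floor_le hlam)
    rw [negPart_eq_neg.mpr (sub_nonpos.mpr hle), neg_sub]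
  exact hsum ▸ hasSum_sum_of_ne_finset_zero hsupp

end poissonPMF

lemma abs_eq_self_add_two_mul_negPart {α : Type*} [Ring α] [LinearOrder α] [IsOrderedRing α]
    (a : α) : |a| = a + 2 * a⁻ := by
  rw [two_mul, ← add_assoc, ← posPart_add_negPart, add_left_inj, ← sub_eq_iff_eq_add]
  exact posPart_sub_negPart a

/-- The mean absolute deviation of a Poisson random variable (Diaconis–Zabell). -/
theorem poisson_mad_eq (lam : ℝ) (hlam : 0 < lam) :
    ∑' k : ℕ, |(k : ℝ) - lam| * poissonPMF lam k
      = 2 * lam * Real.exp (-lam) * lam ^ (Nat.floor lam) /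
          (Nat.factorial (Nat.floor lam)) := by
  have hmad : HasSum (fun k : ℕ ↦ |(k : ℝ) - lam| * poissonPMF lam k)
      (2 * (lam * poissonPMF lam ⌊lam⌋₊)) := by
    simpa only [abs_eq_self_add_two_mul_negPart, add_mul, mul_assoc, zero_add] using
      (poissonPMF.hasSum_sub_mul lam).add
        ((poissonPMF.hasSum_negPart_sub_mul hlam.le).mul_left 2)
  rw [hmad.tsum_eq, poissonPMF]
  ring
end

section
/- If P_λ is a Poisson random variable whose mean λ is a positive integer, then E[P_λ | P_λ ≥ λ] ≤ λ + √λ. -/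
open Finset

theorem tsum_ite_le_eq_tsum_add {M : Type*} [AddCommMonoid M] [TopologicalSpace M]
    (N : ℕ) (g : ℕ → M) :
    ∑' k, (if N ≤ k then g k else 0) = ∑' j, g (N + j) := by
  have hsupp : Function.support (fun k ↦ if N ≤ k then g k else 0) ⊆ Set.range (N + ·) := by
    intro k hk
    exact ⟨k - N, Nat.add_sub_cancel' (by_contra fun h ↦ hk (if_neg h))⟩
  rw [← (add_right_injective N).tsum_eq hsupp]
  simp only [Nat.le_add_right, if_true]

theorem summable_mul_of_summable_sq_mul {ι : Type*} {g w : ι → ℝ} (hw : ∀ i, 0 ≤ w i)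
    (hw_sum : Summable w) (hsq : Summable fun i ↦ g i ^ 2 * w i) (hg : ∀ i, 0 ≤ g i) :
    Summable fun i ↦ g i * w i :=
  ((hsq.add hw_sum).div_const 2).of_nonneg_of_le (fun i ↦ mul_nonneg (hg i) (hw i)) fun i ↦ by
    nlinarith [mul_nonneg (sq_nonneg (g i - 1)) (hw i)]

theorem sq_tsum_mul_le_tsum_sq_mul_mul_tsum {ι : Type*} {g w : ι → ℝ} (hw : ∀ i, 0 ≤ w i)
    (hw_sum : Summable w) (hsq : Summable fun i ↦ g i ^ 2 * w i)
    (hmul : Summable fun i ↦ g i * w i) :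
    (∑' i, g i * w i) ^ 2 ≤ (∑' i, g i ^ 2 * w i) * ∑' i, w i :=
  le_of_tendsto_of_tendsto' (hmul.hasSum.pow 2) (Filter.Tendsto.mul hsq.hasSum hw_sum.hasSum)
    fun s ↦ sum_sq_le_sum_mul_sum_of_sq_le_mul s (fun i _ ↦ mul_nonneg (sq_nonneg _) (hw i))
      (fun i _ ↦ hw i) fun i _ ↦ (mul_pow _ _ 2).trans_le (by rw [mul_assoc, ← sq])

theorem sum_range_succ_sq_mul_le {f : ℕ → ℝ} {c : ℝ}
    (hrec : ∀ j : ℕ, ((j : ℝ) + 1) * f (j + 1) ≤ c * (f j - f (j + 1))) (n : ℕ) :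
    ∑ j ∈ range (n + 1), (j : ℝ) ^ 2 * f j ≤ c * ∑ j ∈ range n, f j - c * n * f n := by
  induction n with
  | zero => simp
  | succ n ih =>
    rw [sum_range_succ _ (n + 1), sum_range_succ f n]
    push_cast
    nlinarith [mul_le_mul_of_nonneg_left (hrec n) (by positivity : (0 : ℝ) ≤ n + 1)]

theorem summable_sq_mul_and_tsum_le {f : ℕ → ℝ} {c : ℝ} (hc : 0 ≤ c) (hf : ∀ j, 0 ≤ f j)
    (hf_sum : Summable f) (hrec : ∀ j : ℕ, ((j : ℝ) + 1) * f (j + 1) ≤ c * (f j - f (j + 1))) :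
    Summable (fun j : ℕ ↦ (j : ℝ) ^ 2 * f j) ∧ ∑' j : ℕ, (j : ℝ) ^ 2 * f j ≤ c * ∑' j, f j := by
  have hbound : ∀ n, ∑ j ∈ range n, (j : ℝ) ^ 2 * f j ≤ c * ∑' j, f j := by
    rintro (_ | n)
    · simpa using mul_nonneg hc (tsum_nonneg hf)
    · calc ∑ j ∈ range (n + 1), (j : ℝ) ^ 2 * f j ≤ c * ∑ j ∈ range n, f j - c * n * f n :=
            sum_range_succ_sq_mul_le hrec n
        _ ≤ c * ∑' j, f j := by
            have := hf_sum.sum_le_tsum (range n) fun j _ ↦ hf j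
            nlinarith [mul_nonneg (mul_nonneg hc (Nat.cast_nonneg n : (0 : ℝ) ≤ n)) (hf n)]
  have hnn : ∀ j : ℕ, 0 ≤ (j : ℝ) ^ 2 * f j := fun j ↦ mul_nonneg (sq_nonneg _) (hf j)
  exact ⟨summable_of_sum_range_le hnn hbound, Real.tsum_le_of_sum_range_le hnn hbound⟩

theorem poissonPMF_nonneg {r : ℝ} (hr : 0 ≤ r) (k : ℕ) : 0 ≤ poissonPMF r k := by
  unfold poissonPMF; positivity

theorem poissonPMF_pos {r : ℝ} (hr : 0 < r) (k : ℕ) : 0 < poissonPMF r k := by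
  unfold poissonPMF; positivity

theorem summable_poissonPMF (r : ℝ) : Summable (poissonPMF r) := by
  refine ((Real.summable_pow_div_factorial r).mul_left (Real.exp (-r))).congr fun k ↦ ?_
  rw [poissonPMF, mul_div_assoc]

theorem succ_mul_poissonPMF_succ (r : ℝ) (k : ℕ) :
    (k + 1) * poissonPMF r (k + 1) = r * poissonPMF r k := by
  simp only [poissonPMF, Nat.factorial_succ, Nat.cast_mul, pow_succ]
  field_simp
  push_cast
  ring

theorem summable_poissonPMF_add (r : ℝ) (N : ℕ) : Summable fun j ↦ poissonPMF r (N + j) := by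
  simpa only [add_comm N] using (summable_nat_add_iff N).2 (summable_poissonPMF r)

theorem tsum_mul_poissonPMF_add_le (N : ℕ) :
    Summable (fun j : ℕ ↦ (j : ℝ) * poissonPMF N (N + j)) ∧
      ∑' j : ℕ, (j : ℝ) * poissonPMF N (N + j) ≤ √N * ∑' j : ℕ, poissonPMF N (N + j) := by
  set p : ℕ → ℝ := fun j ↦ poissonPMF N (N + j)
  have hp : ∀ j, 0 ≤ p j := fun j ↦ poissonPMF_nonneg N.cast_nonneg _
  have hp_sum : Summable p := summable_poissonPMF_add N N
  have hrec : ∀ j : ℕ, ((j : ℝ) + 1) * p (j + 1) ≤ N * (p j - p (j + 1)) := fun j ↦ by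
    have := succ_mul_poissonPMF_succ N (N + j)
    simp only [p, ← add_assoc]
    push_cast at this ⊢
    linarith
  obtain ⟨hsq, hsq_le⟩ := summable_sq_mul_and_tsum_le N.cast_nonneg hp hp_sum hrec
  have hmul := summable_mul_of_summable_sq_mul hp hp_sum hsq fun j ↦ j.cast_nonneg
  have hmass : 0 ≤ ∑' j, p j := tsum_nonneg hp
  refine ⟨hmul, (pow_le_pow_iff_left₀ (tsum_nonneg fun j ↦ mul_nonneg j.cast_nonneg (hp j))
    (by positivity) two_ne_zero).1 ?_⟩
  calc (∑' j : ℕ, (j : ℝ) * p j) ^ 2 ≤ (∑' j : ℕ, (j : ℝ) ^ 2 * p j) * ∑' j, p j :=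
        sq_tsum_mul_le_tsum_sq_mul_mul_tsum hp hp_sum hsq hmul
    _ ≤ N * (∑' j, p j) * ∑' j, p j := by gcongr
    _ = (√N * ∑' j, p j) ^ 2 := by rw [mul_pow, Real.sq_sqrt N.cast_nonneg]; ring

/-- If the mean `λ` of a Poisson random variable is a positive integer, then
`E[P_λ | P_λ ≥ λ] ≤ λ + √λ`. -/
theorem poisson_integer_mean_tail_cond_exp_le (lam : ℕ) (hlam : 0 < lam) :
    (∑' k : ℕ, if lam ≤ k then (k : ℝ) * poissonPMF lam k else 0) /
        (∑' k : ℕ, if lam ≤ k then poissonPMF lam k else 0)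
      ≤ (lam : ℝ) + Real.sqrt lam := by
  rw [tsum_ite_le_eq_tsum_add, tsum_ite_le_eq_tsum_add]
  have hmass_sum := summable_poissonPMF_add lam lam
  have hmass_pos : 0 < ∑' j : ℕ, poissonPMF lam (lam + j) :=
    hmass_sum.tsum_pos (fun j ↦ poissonPMF_nonneg lam.cast_nonneg _) 0
      (poissonPMF_pos (Nat.cast_pos.2 hlam) _)
  obtain ⟨hexcess_sum, hexcess_le⟩ := tsum_mul_poissonPMF_add_le lam
  have hsplit : ∑' j : ℕ, ((lam + j : ℕ) : ℝ) * poissonPMF lam (lam + j) =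
      lam * ∑' j : ℕ, poissonPMF lam (lam + j) + ∑' j : ℕ, (j : ℝ) * poissonPMF lam (lam + j) := by
    simp only [Nat.cast_add, add_mul]
    rw [(hmass_sum.mul_left _).tsum_add hexcess_sum, tsum_mul_left]
  rw [hsplit, div_le_iff₀ hmass_pos]
  linarith
end
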